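/- Let ς be a 1-inflator on K with target a division ring L. Then the fundamental ring O := R_ς = {a ∈ K : there exists c ∈ L with ς_2(K·(1,a)) = {(x, x·c) : x ∈ L}} is a valuation subring of K; the fundamental ideal I_ς equals the maximal ideal of O (its set of nonunits); and the map sending a ∈ O to the unique c ∈ L with ς_2(K·(1,a)) = {(x, x·c) : x ∈ L} is a K₀-algebra homomorphism O → L with kernel I_ς, inducing an injective K₀-algebra homomorphism from the residue field O/I_ς into L. -/

import Mathlib

/-- The "direct sum" of a submodule of `Fin n → N` and a submodule of `Fin m → N`,
as a submodule of `Fin (n+m) → N`, under the standard identification. -/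
def Submodule.finDSum {S N : Type*} [Ring S] [AddCommGroup N] [Module S N] {n m : ℕ}
    (V : Submodule S (Fin n → N)) (W : Submodule S (Fin m → N)) :
    Submodule S (Fin (n + m) → N) where
  carrier := {x | (fun i => x (Fin.castAdd m i)) ∈ V ∧ (fun j => x (Fin.natAdd n j)) ∈ W}
  add_mem' := by
    rintro x y ⟨hx1, hx2⟩ ⟨hy1, hy2⟩
    exact ⟨V.add_mem hx1 hy1, W.add_mem hx2 hy2⟩
  zero_mem' := ⟨V.zero_mem, W.zero_mem⟩
  smul_mem' := by
    rintro c x ⟨hx1, hx2⟩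
    exact ⟨V.smul_mem c hx1, W.smul_mem c hx2⟩

/-- The coordinatewise action of a `K₀`-matrix on `Fin m → N`, where `N` carries
commuting `K₀`- and `S`-actions, as an `S`-linear map. -/
def matVec {K₀ S N : Type*} [CommRing K₀] [Ring S] [AddCommGroup N] [Module S N]
    [Module K₀ N] [SMulCommClass K₀ S N] {n m : ℕ}
    (μ : Matrix (Fin n) (Fin m) K₀) : (Fin m → N) →ₗ[S] (Fin n → N) where
  toFun x := fun i => ∑ j, μ i j • x j
  map_add' x y := by
    funext i
    simp [smul_add, Finset.sum_add_distrib]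
  map_smul' c x := by
    funext i
    simp only [Pi.smul_apply, RingHom.id_apply, Finset.smul_sum]
    exact Finset.sum_congr rfl fun j _ => smul_comm _ _ _

/-- The graph `{(x, a·x) : x ∈ K}` as a `K`-subspace of `K² = Fin 2 → K`. -/
def graphK (K : Type*) [Field K] (a : K) : Submodule K (Fin 2 → K) where
  carrier := {v | v 1 = a * v 0}
  add_mem' := by
    intro x y hx hy
    simp only [Set.mem_setOf_eq, Pi.add_apply] at *
    rw [hx, hy]; ring
  zero_mem' := by simp
  smul_mem' := by
    intro c x hx
    simp only [Set.mem_setOf_eq, Pi.smul_apply, smul_eq_mul] at *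
    rw [hx]; ring

/-- The line `{(x, x·c) : x ∈ L}` as a left `L`-subspace of `L² = Fin 2 → L`. -/
def graphL {L : Type*} [DivisionRing L] (c : L) : Submodule L (Fin 2 → L) where
  carrier := {v | v 1 = v 0 * c}
  add_mem' := by
    intro x y hx hy
    simp only [Set.mem_setOf_eq, Pi.add_apply] at *
    rw [hx, hy, add_mul]
  zero_mem' := by simp
  smul_mem' := by
    intro t x hx
    simp only [Set.mem_setOf_eq, Pi.smul_apply, smul_eq_mul] at *
    rw [hx, mul_assoc]

/-- A 1-inflator on `K` with target a division ring `L`. -/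
structure OneInflator (K₀ K L : Type*) [Field K₀] [Field K] [Algebra K₀ K]
    [DivisionRing L] [Algebra K₀ L] where
  ς : ∀ n : ℕ, Submodule K (Fin n → K) → Submodule L (Fin n → L)
  mono : ∀ (n : ℕ) (V W : Submodule K (Fin n → K)), V ≤ W → ς n V ≤ ς n W
  map_dsum : ∀ (n m : ℕ) (V : Submodule K (Fin n → K)) (W : Submodule K (Fin m → K)),
    ς (n + m) (V.finDSum W) = (ς n V).finDSum (ς m W)
  equivariant : ∀ (n : ℕ) (μ : Matrix (Fin n) (Fin n) K₀), IsUnit μ →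
    ∀ V : Submodule K (Fin n → K),
      ς n (V.map (matVec (S := K) (N := K) μ)) = (ς n V).map (matVec (S := L) (N := L) μ)
  finrank_eq : ∀ (n : ℕ) (V : Submodule K (Fin n → K)),
    Module.finrank L (ς n V) = Module.finrank K V

namespace OneInflator

variable {K₀ K L : Type*} [Field K₀] [Field K] [Algebra K₀ K]
  [DivisionRing L] [Algebra K₀ L]

/-- `a ∈ K` specializes to `c ∈ L`. -/
def Specializes (I : OneInflator K₀ K L) (a : K) (c : L) : Prop :=
  I.ς 2 (graphK K a) = graphL c

/-- The fundamental ring of a 1-inflator, as a subset of `K`. -/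
def fundSet (I : OneInflator K₀ K L) : Set K :=
  {a | ∃ c : L, I.Specializes a c}

/-- The fundamental ideal of a 1-inflator, as a subset of `K`. -/
def fundIdealSet (I : OneInflator K₀ K L) : Set K :=
  {a | I.Specializes a 0}

end OneInflator

/-!
Because `ς₂` of a line is a line, `a` specializes to `c` as soon as `(1,c) ∈ ς₂(K·(1,a))`;
otherwise `ς₂(K·(1,a)) = L·(0,1)`, and the coordinate swap shows that `a⁻¹` specializes to `0`.
This gives the valuation property and, together with `a⁻¹ ↦ c⁻¹` whenever `a ↦ c ≠ 0`, the
description of the fundamental ideal.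

Sums and products are read off in dimension three. If `a ↦ ca` and `b ↦ cb`, then
`ς₃(K·(1,a,b))` lies in `ς₃` of the planes `x₁ = a x₀` and `x₂ = b x₀`, that is, in the planes
`x₁ = x₀ ca` and `x₂ = x₀ cb`, so it is `L·(1,ca,cb)`. The transvection `x₁ ↦ x₁ + x₂` carries
it to `L·(1,ca+cb,cb)`, which therefore lies in `ς₃` of the plane `x₁ = (a+b) x₀`; hence
`a + b ↦ ca + cb`. Products use the line `K·(1,a,ab)` and the planes `x₁ = a x₀`, `x₂ = b x₁`
in the same way. Scalars `q ∈ K₀` specialize to themselves because a transvection carries the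
graph of `0` to the graph of `q`.
-/

open Submodule Module

section MatVec

variable {K₀ S N : Type*} [CommRing K₀] [Ring S] [AddCommGroup N] [Module S N]
  [Module K₀ N] [SMulCommClass K₀ S N]

lemma matVec_apply {n m : ℕ} (μ : Matrix (Fin n) (Fin m) K₀) (x : Fin m → N) (i : Fin n) :
    matVec (S := S) μ x i = ∑ j, μ i j • x j := rfl

lemma matVec_permMatrix {n : ℕ} (σ : Equiv.Perm (Fin n)) (x : Fin n → N) :
    matVec (S := S) (σ.permMatrix K₀) x = x ∘ σ := by
  funext i
  simp [matVec_apply, PEquiv.toMatrix_apply, ite_smul]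

lemma map_matVec_permMatrix_span {n : ℕ} (σ : Equiv.Perm (Fin n)) (x : Fin n → N) :
    (span S {x}).map (matVec (S := S) (σ.permMatrix K₀)) = span S {x ∘ σ} := by
  rw [map_span, Set.image_singleton, matVec_permMatrix]

lemma matVec_transvection {n : ℕ} (i j : Fin n) (c : K₀) (x : Fin n → N) :
    matVec (S := S) (Matrix.transvection i j c) x = x + Pi.single i (c • x j) := by
  funext k
  rcases eq_or_ne k i with rfl | hk
  · simp [matVec_apply, Matrix.transvection, add_smul, Finset.sum_add_distrib,
      Matrix.one_apply, Matrix.single_apply, ite_smul]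
  · simp [matVec_apply, Matrix.transvection, Matrix.one_apply, ite_smul, hk, Ne.symm hk]

end MatVec

lemma isUnit_permMatrix {K₀ : Type*} [CommRing K₀] {n : ℕ} (σ : Equiv.Perm (Fin n)) :
    IsUnit (σ.permMatrix K₀) := by
  rw [Matrix.isUnit_iff_isUnit_det, Matrix.det_permutation]
  exact (Equiv.Perm.sign σ).isUnit.map (Int.castRingHom K₀)

lemma isUnit_transvection {K₀ : Type*} [CommRing K₀] {n : ℕ} {i j : Fin n} (h : i ≠ j)
    (c : K₀) : IsUnit (Matrix.transvection i j c) := by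
  simp [Matrix.isUnit_iff_isUnit_det, Matrix.det_transvection_of_ne _ _ h]

lemma mem_finDSum_top {S N : Type*} [Ring S] [AddCommGroup N] [Module S N] {n : ℕ}
    {V : Submodule S (Fin n → N)} {x : Fin (n + 1) → N} :
    x ∈ V.finDSum (⊤ : Submodule S (Fin 1 → N)) ↔ Fin.init x ∈ V :=
  ⟨And.left, fun h => ⟨h, trivial⟩⟩

section Lines

variable {D ι : Type*} [DivisionRing D] {X : Submodule D (ι → D)}

lemma eq_span_singleton_of_finrank_eq_one (hX : finrank D X = 1) {w : ι → D} (hw : w ∈ X)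
    (hw0 : w ≠ 0) : X = span D {w} :=
  have : FiniteDimensional D X := Module.finite_of_finrank_eq_succ hX
  (eq_of_le_of_finrank_eq ((span_singleton_le_iff_mem _ _).2 hw)
    (by rw [finrank_span_singleton hw0, hX])).symm

lemma eq_span_singleton_of_forall_eq_smul (hX : finrank D X = 1) (i : ι) {w : ι → D}
    (hw : ∀ u ∈ X, u = u i • w) : X = span D {w} := by
  obtain ⟨u, hu, hu0⟩ := exists_mem_ne_zero_of_ne_bot (p := X) (by rintro rfl; simp at hX)
  have hu' := hw u hu
  set c := u i
  have hc : c ≠ 0 := fun h => hu0 (by rw [hu', h, zero_smul])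
  have hwu : w = c⁻¹ • u := by rw [hu', smul_smul, inv_mul_cancel₀ hc, one_smul]
  exact eq_span_singleton_of_finrank_eq_one hX (hwu ▸ X.smul_mem _ hu)
    (by rw [hwu]; exact smul_ne_zero (inv_ne_zero hc) hu0)

end Lines

section Graph

variable {D : Type*} [DivisionRing D]

lemma mem_graphL {c : D} {v : Fin 2 → D} : v ∈ graphL c ↔ v 1 = v 0 * c := Iff.rfl

lemma graphK_eq_graphL (K : Type*) [Field K] (a : K) : graphK K a = graphL a := by
  ext v
  show v 1 = a * v 0 ↔ v 1 = v 0 * a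
  rw [mul_comm]

lemma span_le_graphK_finDSum_top {K : Type*} [Field K] {d : K} {x : Fin 3 → K}
    (hx : x 1 = d * x 0) : span K {x} ≤ (graphK K d).finDSum (⊤ : Submodule K (Fin 1 → K)) :=
  (span_singleton_le_iff_mem _ _).2 ⟨hx, trivial⟩

lemma graphL_eq_span (c : D) : graphL c = span D {![1, c]} := by
  ext v
  rw [mem_graphL, mem_span_singleton]
  constructor
  · intro h
    exact ⟨v 0, funext fun i => by fin_cases i <;> simp [h]⟩
  · rintro ⟨t, rfl⟩
    simp

lemma vecCons_one_ne_zero {n : ℕ} (v : Fin n → D) :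
    (Matrix.vecCons 1 v : Fin (n + 1) → D) ≠ 0 :=
  fun h => one_ne_zero (congrFun h 0)

lemma finrank_graphL (c : D) : finrank D (graphL c) = 1 := by
  rw [graphL_eq_span, finrank_span_singleton (vecCons_one_ne_zero _)]

lemma graphL_injective : Function.Injective (graphL (L := D)) := by
  intro c c' h
  have hmem : ![1, c] ∈ graphL c' := h ▸ mem_graphL.2 (by simp)
  simpa [mem_graphL] using hmem

lemma graphL_zero :
    graphL (0 : D) = (⊤ : Submodule D (Fin 1 → D)).finDSum (⊥ : Submodule D (Fin 1 → D)) := by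
  ext v
  simp [mem_graphL, Submodule.finDSum, funext_iff, Fin.forall_fin_one]

variable {K₀ : Type*} [Field K₀] [Algebra K₀ D]

lemma map_swap_graphL {c : D} (hc : c ≠ 0) :
    (graphL c).map (matVec (S := D) ((Equiv.swap 0 1 : Equiv.Perm (Fin 2)).permMatrix K₀)) =
      graphL c⁻¹ := by
  rw [graphL_eq_span, map_matVec_permMatrix_span, graphL_eq_span]
  have : (![1, c] ∘ Equiv.swap 0 1 : Fin 2 → D) = c • ![1, c⁻¹] := by
    funext i; fin_cases i <;> simp [hc]
  rw [this, span_singleton_smul_eq (IsUnit.mk0 c hc)]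

lemma map_transvection_graphL_zero (q : K₀) :
    (graphL (0 : D)).map (matVec (S := D) (Matrix.transvection 1 0 q)) =
      graphL (algebraMap K₀ D q) := by
  rw [graphL_eq_span, map_span, Set.image_singleton, matVec_transvection, graphL_eq_span]
  congr 2
  funext i
  fin_cases i <;> simp [Algebra.algebraMap_eq_smul_one]

end Graph

namespace OneInflator

variable {K₀ K L : Type*} [Field K₀] [Field K] [Algebra K₀ K]
  [DivisionRing L] [Algebra K₀ L] (I : OneInflator K₀ K L)

lemma ς_one_top : I.ς 1 ⊤ = ⊤ :=
  eq_top_of_finrank_eq (by rw [I.finrank_eq, finrank_top, finrank_fin_fun, finrank_fin_fun])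

lemma ς_one_bot : I.ς 1 ⊥ = ⊥ := by
  rw [← finrank_eq_zero (R := L), I.finrank_eq, finrank_bot]

lemma ς_finDSum_top {n : ℕ} (V : Submodule K (Fin n → K)) :
    I.ς (n + 1) (V.finDSum ⊤) = (I.ς n V).finDSum ⊤ := by
  rw [I.map_dsum, ς_one_top]

lemma ς_span_matVec {n : ℕ} {μ : Matrix (Fin n) (Fin n) K₀} (hμ : IsUnit μ) {v : Fin n → K}
    {w : Fin n → L} (h : I.ς n (span K {v}) = span L {w}) :
    I.ς n (span K {matVec (S := K) μ v}) = span L {matVec (S := L) μ w} := by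
  have := I.equivariant n μ hμ (span K {v})
  rwa [map_span, Set.image_singleton, h, map_span, Set.image_singleton] at this

lemma comp_mem_ς_map_permMatrix {n : ℕ} (σ : Equiv.Perm (Fin n))
    {V : Submodule K (Fin n → K)} {u : Fin n → L} (hu : u ∈ I.ς n V) :
    u ∘ σ ∈ I.ς n (V.map (matVec (S := K) (σ.permMatrix K₀))) := by
  rw [I.equivariant n _ (isUnit_permMatrix σ)]
  exact ⟨u, hu, matVec_permMatrix σ u⟩

lemma finrank_ς_graphK (a : K) : finrank L (I.ς 2 (graphK K a)) = 1 := by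
  rw [I.finrank_eq, graphK_eq_graphL, finrank_graphL]

lemma specializes_zero : I.Specializes 0 0 := by
  rw [Specializes, graphK_eq_graphL, graphL_zero, graphL_zero]
  exact (I.map_dsum 1 1 ⊤ ⊥).trans (by rw [ς_one_top, ς_one_bot])

lemma zero_mem_fundSet : (0 : K) ∈ I.fundSet := ⟨0, I.specializes_zero⟩

lemma specializes_algebraMap (q : K₀) :
    I.Specializes (algebraMap K₀ K q) (algebraMap K₀ L q) := by
  have h0 := I.specializes_zero
  rw [Specializes, graphK_eq_graphL] at h0 ⊢
  rw [← map_transvection_graphL_zero, I.equivariant 2 _ (isUnit_transvection (by decide) q),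
    h0, map_transvection_graphL_zero]

lemma specializes_one : I.Specializes 1 1 := by
  simpa using I.specializes_algebraMap 1

noncomputable def residue (a : K) : L :=
  Classical.epsilon (I.Specializes a)

variable {I}

lemma specializes_of_mem {a : K} {c : L} (h : ![1, c] ∈ I.ς 2 (graphK K a)) :
    I.Specializes a c := by
  rw [Specializes, graphL_eq_span]
  exact eq_span_singleton_of_finrank_eq_one (I.finrank_ς_graphK a) h (vecCons_one_ne_zero _)

lemma Specializes.unique {a : K} {c c' : L} (h : I.Specializes a c)
    (h' : I.Specializes a c') : c = c' :=
  graphL_injective (h.symm.trans h')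

lemma specializes_residue {a : K} (ha : a ∈ I.fundSet) : I.Specializes a (I.residue a) :=
  Classical.epsilon_spec ha

lemma Specializes.residue_eq {a : K} {c : L} (h : I.Specializes a c) : I.residue a = c :=
  (specializes_residue ⟨c, h⟩).unique h

lemma Specializes.inv {a : K} {c : L} (h : I.Specializes a c) (ha : a ≠ 0) (hc : c ≠ 0) :
    I.Specializes a⁻¹ c⁻¹ := by
  rw [Specializes, graphK_eq_graphL] at h ⊢
  rw [← map_swap_graphL (K₀ := K₀) ha, I.equivariant 2 _ (isUnit_permMatrix _), h,
    map_swap_graphL hc]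

lemma ς_graphK_eq_of_not_mem {a : K} (ha : a ∉ I.fundSet) :
    I.ς 2 (graphK K a) = span L {![0, 1]} := by
  refine eq_span_singleton_of_forall_eq_smul (I.finrank_ς_graphK a) 1 fun u hu => ?_
  have hu0 : u 0 = 0 := by
    by_contra h
    refine ha ⟨(u 0)⁻¹ * u 1, specializes_of_mem ?_⟩
    have : ![1, (u 0)⁻¹ * u 1] = (u 0)⁻¹ • u := by funext i; fin_cases i <;> simp [h]
    exact this ▸ (I.ς 2 _).smul_mem _ hu
  funext i; fin_cases i <;> simp [hu0]

lemma specializes_inv_zero_of_not_mem {a : K} (ha : a ∉ I.fundSet) : I.Specializes a⁻¹ 0 := by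
  have ha0 : a ≠ 0 := by rintro rfl; exact ha I.zero_mem_fundSet
  rw [Specializes, graphK_eq_graphL, ← map_swap_graphL (K₀ := K₀) ha0,
    I.equivariant 2 _ (isUnit_permMatrix _), ← graphK_eq_graphL, ς_graphK_eq_of_not_mem ha,
    map_matVec_permMatrix_span, graphL_eq_span]
  congr 2
  funext i; fin_cases i <;> simp

lemma Specializes.apply_one_eq_of_le {d : K} {c : L} (h : I.Specializes d c)
    {V : Submodule K (Fin 3 → K)} (hV : V ≤ (graphK K d).finDSum (⊤ : Submodule K (Fin 1 → K)))
    {u : Fin 3 → L} (hu : u ∈ I.ς 3 V) : u 1 = u 0 * c := by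
  have hu' : u ∈ (I.ς 2 (graphK K d)).finDSum (⊤ : Submodule L (Fin 1 → L)) :=
    (I.ς_finDSum_top _).le (I.mono 3 _ _ hV hu)
  rw [h] at hu'
  exact hu'.1

lemma ς_span_vec3_of_specializes {a b : K} {ca cb : L} (ha : I.Specializes a ca)
    (hb : I.Specializes b cb) : I.ς 3 (span K {![1, a, b]}) = span L {![1, ca, cb]} := by
  have hfin : finrank L (I.ς 3 (span K {![1, a, b]})) = 1 := by
    rw [I.finrank_eq, finrank_span_singleton (vecCons_one_ne_zero _)]
  refine eq_span_singleton_of_forall_eq_smul hfin 0 fun u hu => ?_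
  have h1 : u 1 = u 0 * ca := ha.apply_one_eq_of_le (span_le_graphK_finDSum_top (by simp)) hu
  have h2 : u 2 = u 0 * cb := by
    have := hb.apply_one_eq_of_le
      (by rw [map_matVec_permMatrix_span]
          exact span_le_graphK_finDSum_top (by simp [Equiv.swap_apply_def]))
      (I.comp_mem_ς_map_permMatrix (Equiv.swap 1 2) hu)
    simpa [Equiv.swap_apply_def] using this
  funext i; fin_cases i <;> simp [h1, h2]

lemma ς_span_vec3_mul_of_specializes {a b : K} {ca cb : L} (ha : I.Specializes a ca)
    (hb : I.Specializes b cb) :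
    I.ς 3 (span K {![1, a, a * b]}) = span L {![1, ca, ca * cb]} := by
  have hfin : finrank L (I.ς 3 (span K {![1, a, a * b]})) = 1 := by
    rw [I.finrank_eq, finrank_span_singleton (vecCons_one_ne_zero _)]
  refine eq_span_singleton_of_forall_eq_smul hfin 0 fun u hu => ?_
  have h1 : u 1 = u 0 * ca := ha.apply_one_eq_of_le (span_le_graphK_finDSum_top (by simp)) hu
  -- `u ∘ finRotate 3 = (u 1, u 2, u 0)`, so the plane `x₁ = b x₀` pulls back to `x₂ = b x₁`.
  have h2 : u 2 = u 1 * cb := by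
    have := hb.apply_one_eq_of_le
      (by rw [map_matVec_permMatrix_span]
          exact span_le_graphK_finDSum_top (by simp [mul_comm]))
      (I.comp_mem_ς_map_permMatrix (finRotate 3) hu)
    simpa using this
  funext i; fin_cases i <;> simp [h1, h2, mul_assoc]

lemma specializes_of_ς_span_vec3 {d e : K} {c c' : L}
    (h : I.ς 3 (span K {![1, d, e]}) = span L {![1, c, c']}) : I.Specializes d c := by
  have hmem : ![1, c, c'] ∈ I.ς 3 (span K {![1, d, e]}) := h ▸ mem_span_singleton_self _
  have := (I.ς_finDSum_top _).le (I.mono 3 _ _ (span_le_graphK_finDSum_top (d := d) (by simp)) hmem)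
  have hinit : Fin.init ![1, c, c'] = ![1, c] := by funext i; fin_cases i <;> rfl
  exact specializes_of_mem (hinit ▸ mem_finDSum_top.1 this)

lemma Specializes.add {a b : K} {ca cb : L} (ha : I.Specializes a ca)
    (hb : I.Specializes b cb) : I.Specializes (a + b) (ca + cb) := by
  have h := I.ς_span_matVec (isUnit_transvection (by decide : (1 : Fin 3) ≠ 2) (1 : K₀))
    (ς_span_vec3_of_specializes ha hb)
  have hK : matVec (S := K) (Matrix.transvection 1 2 (1 : K₀)) ![1, a, b] = ![1, a + b, b] := by
    rw [matVec_transvection]; funext i; fin_cases i <;> simp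
  have hL : matVec (S := L) (Matrix.transvection 1 2 (1 : K₀)) ![1, ca, cb] =
      ![1, ca + cb, cb] := by
    rw [matVec_transvection]; funext i; fin_cases i <;> simp
  rw [hK, hL] at h
  exact specializes_of_ς_span_vec3 h

lemma Specializes.mul {a b : K} {ca cb : L} (ha : I.Specializes a ca)
    (hb : I.Specializes b cb) : I.Specializes (a * b) (ca * cb) := by
  have h := I.ς_span_matVec (isUnit_permMatrix (Equiv.swap (1 : Fin 3) 2))
    (ς_span_vec3_mul_of_specializes ha hb)
  have hK : ![1, a, a * b] ∘ Equiv.swap 1 2 = ![1, a * b, a] := by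
    funext i; fin_cases i <;> simp [Equiv.swap_apply_def]
  have hL : ![1, ca, ca * cb] ∘ Equiv.swap 1 2 = ![1, ca * cb, ca] := by
    funext i; fin_cases i <;> simp [Equiv.swap_apply_def]
  rw [matVec_permMatrix, matVec_permMatrix, hK, hL] at h
  exact specializes_of_ς_span_vec3 h

lemma Specializes.neg {a : K} {c : L} (h : I.Specializes a c) : I.Specializes (-a) (-c) := by
  simpa using (I.specializes_algebraMap (-1)).mul h

lemma Specializes.sub {a b : K} {ca cb : L} (ha : I.Specializes a ca)
    (hb : I.Specializes b cb) : I.Specializes (a - b) (ca - cb) := by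
  simpa [sub_eq_add_neg] using ha.add hb.neg

variable (I)

def fundRing : ValuationSubring K where
  carrier := I.fundSet
  mul_mem' := fun ⟨_, ha⟩ ⟨_, hb⟩ => ⟨_, ha.mul hb⟩
  one_mem' := ⟨1, I.specializes_one⟩
  add_mem' := fun ⟨_, ha⟩ ⟨_, hb⟩ => ⟨_, ha.add hb⟩
  zero_mem' := I.zero_mem_fundSet
  neg_mem' := fun ⟨_, ha⟩ => ⟨_, ha.neg⟩
  mem_or_inv_mem' _ := or_iff_not_imp_left.2 fun ha => ⟨0, specializes_inv_zero_of_not_mem ha⟩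

lemma fundIdealSet_eq :
    I.fundIdealSet = {a | a ∈ I.fundSet ∧ ¬∃ b ∈ I.fundSet, a * b = 1} := by
  ext a
  constructor
  · intro (h : I.Specializes a 0)
    refine ⟨⟨0, h⟩, fun ⟨b, ⟨cb, hb⟩, hab⟩ => one_ne_zero (I.specializes_one.unique ?_)⟩
    simpa [hab] using h.mul hb
  · rintro ⟨⟨c, hc⟩, hnu⟩
    obtain rfl | hc0 := eq_or_ne c 0
    · exact hc
    have ha0 : a ≠ 0 := by
      rintro rfl
      exact hc0 (hc.unique I.specializes_zero)
    exact absurd ⟨a⁻¹, ⟨c⁻¹, hc.inv ha0 hc0⟩, mul_inv_cancel₀ ha0⟩ hnu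

end OneInflator

open OneInflator in
theorem oneInflator_fundamental_ring_valuation_general
    {K₀ K L : Type*} [Field K₀] [Field K] [Algebra K₀ K]
    [DivisionRing L] [Algebra K₀ L] (I : OneInflator K₀ K L) :
    (∃ O : ValuationSubring K, (O : Set K) = I.fundSet) ∧
    (I.fundIdealSet = {a | a ∈ I.fundSet ∧ ¬∃ b ∈ I.fundSet, a * b = 1}) ∧
    (∃ res : K → L,
      (∀ a ∈ I.fundSet, I.Specializes a (res a)) ∧
      (∀ a ∈ I.fundSet, ∀ c : L, I.Specializes a c → c = res a) ∧
      (∀ a ∈ I.fundSet, ∀ b ∈ I.fundSet, res (a + b) = res a + res b) ∧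
      (∀ a ∈ I.fundSet, ∀ b ∈ I.fundSet, res (a * b) = res a * res b) ∧
      res 1 = 1 ∧
      (∀ q : K₀, res (algebraMap K₀ K q) = algebraMap K₀ L q) ∧
      (∀ a ∈ I.fundSet, (res a = 0 ↔ a ∈ I.fundIdealSet)) ∧
      (∀ a ∈ I.fundSet, ∀ b ∈ I.fundSet, res a = res b → a - b ∈ I.fundIdealSet)) := by
  refine ⟨⟨I.fundRing, rfl⟩, I.fundIdealSet_eq, I.residue, fun a => specializes_residue,
    fun a _ c hc => hc.residue_eq.symm, fun a ha b hb => ?_, fun a ha b hb => ?_,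
    I.specializes_one.residue_eq, fun q => (I.specializes_algebraMap q).residue_eq,
    fun a ha => ⟨fun h => (h ▸ specializes_residue ha : I.Specializes a 0),
      Specializes.residue_eq⟩, fun a ha b hb hab => ?_⟩
  · exact ((specializes_residue ha).add (specializes_residue hb)).residue_eq
  · exact ((specializes_residue ha).mul (specializes_residue hb)).residue_eq
  · show I.Specializes (a - b) 0
    simpa [hab] using (specializes_residue ha).sub (specializes_residue hb)

/-- For a 1-inflator `ς` on `K` with target a division ring `L`: the fundamental ring
is a valuation subring of `K`; the fundamental ideal is its set of nonunits (its
maximal ideal); and the generalized residue map is a `K₀`-algebra homomorphism to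
`L` with kernel the fundamental ideal, inducing an injective `K₀`-algebra
homomorphism from the residue field into `L`. -/
theorem oneInflator_fundamental_ring_valuation
    {K₀ K L : Type*} [Field K₀] [Infinite K₀] [Field K] [Algebra K₀ K]
    [DivisionRing L] [Algebra K₀ L] (I : OneInflator K₀ K L) :
    (∃ O : ValuationSubring K, (O : Set K) = I.fundSet) ∧
    (I.fundIdealSet = {a | a ∈ I.fundSet ∧ ¬∃ b ∈ I.fundSet, a * b = 1}) ∧
    (∃ res : K → L,
      (∀ a ∈ I.fundSet, I.Specializes a (res a)) ∧
      (∀ a ∈ I.fundSet, ∀ c : L, I.Specializes a c → c = res a) ∧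
      (∀ a ∈ I.fundSet, ∀ b ∈ I.fundSet, res (a + b) = res a + res b) ∧
      (∀ a ∈ I.fundSet, ∀ b ∈ I.fundSet, res (a * b) = res a * res b) ∧
      res 1 = 1 ∧
      (∀ q : K₀, res (algebraMap K₀ K q) = algebraMap K₀ L q) ∧
      (∀ a ∈ I.fundSet, (res a = 0 ↔ a ∈ I.fundIdealSet)) ∧
      (∀ a ∈ I.fundSet, ∀ b ∈ I.fundSet, res a = res b → a - b ∈ I.fundIdealSet)) :=
  oneInflator_fundamental_ring_valuation_general I
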